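/- Let u₁ have one stable collision (with the stability theorem giving existence and closeness of γ₂ for nearby u₂). Suppose u₁, u₂ are piecewise smooth with two pieces, their collision tendencies satisfy min{|v(x₁⁻,u₁⁻)|, |v(x₂⁻,u₂⁻)|} ≥ V > 0, and d(u₁,u₂) ≤ C̃₃. Then there exists C₅̃ depending only on the problem data and the stable collision factors of u₁ such that d(x₁,x₂) ≤ C₅̃ · d(u₁,u₂), where d is the two-piece semimetric (max L^∞ distance before min and after max of the two discontinuity/collision times, plus the gap between them). -/
import Mathlib


open MeasureTheory Set Filter Topology
open scoped RealInnerProductSpace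

lemma exp_sub_one_le_mul_exp {z : ℝ} (hz : 0 ≤ z) : Real.exp z - 1 ≤ z * Real.exp z := by
  have h2 : Real.exp (-z) * Real.exp z = 1 := by
    rw [← Real.exp_add]; simp
  nlinarith [Real.add_one_le_exp (-z), Real.exp_pos z]

lemma gronwallBound_le_simple {δ K ε x : ℝ} (hK : 0 ≤ K) (hε : 0 ≤ ε) (hx : 0 ≤ x) :
    gronwallBound δ K ε x ≤ (δ + ε * x) * Real.exp (K * x) := by
  rcases eq_or_lt_of_le hK with hK0 | hKpos
  · rw [← hK0, gronwallBound_K0]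
    simp [Real.exp_zero]
  · rw [gronwallBound_of_K_ne_0 (ne_of_gt hKpos)]
    have hz : 0 ≤ K * x := by positivity
    have h1 : Real.exp (K * x) - 1 ≤ (K * x) * Real.exp (K * x) := exp_sub_one_le_mul_exp hz
    have h2 : ε / K * (Real.exp (K * x) - 1) ≤ ε * x * Real.exp (K * x) := by
      rw [div_mul_eq_mul_div, div_le_iff₀ hKpos]
      nlinarith
    nlinarith

/-- Grönwall step with derivative only on the open interval. -/
lemma gron_step {E : Type*} [NormedAddCommGroup E] [NormedSpace ℝ E]
    (y y' : ℝ → E) (K ε δ s t : ℝ) (hK : 0 ≤ K) (hε : 0 ≤ ε) (hst : s ≤ t)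
    (hy : ContinuousOn y (Icc s t))
    (hd : ∀ r ∈ Ioo s t, HasDerivAt y (y' r) r)
    (hb : ∀ r ∈ Ioo s t, ‖y' r‖ ≤ K * ‖y r‖ + ε)
    (hδ : ‖y s‖ ≤ δ) :
    ‖y t‖ ≤ (δ + ε * (t - s)) * Real.exp (K * (t - s)) := by
  rcases eq_or_lt_of_le hst with rfl | hlt
  · simpa using hδ
  -- for each s' in (s,t) apply mathlib's Grönwall inequality on [s', t]
  have key : ∀ s' ∈ Ioo s t, ‖y t‖ ≤ (‖y s'‖ + ε * (t - s)) * Real.exp (K * (t - s)) := by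
    intro s' hs'
    have h1 : ∀ r ∈ Icc s' t, ‖y r‖ ≤ gronwallBound ‖y s'‖ K ε (r - s') := by
      apply norm_le_gronwallBound_of_norm_deriv_right_le
      · exact hy.mono (Icc_subset_Icc hs'.1.le le_rfl)
      · intro r hr
        exact (hd r ⟨lt_of_lt_of_le hs'.1 hr.1, hr.2⟩).hasDerivWithinAt
      · exact le_rfl
      · intro r hr; exact hb r ⟨lt_of_lt_of_le hs'.1 hr.1, hr.2⟩
    have h2 := h1 t ⟨hs'.2.le, le_rfl⟩
    have h3 : gronwallBound ‖y s'‖ K ε (t - s') ≤ (‖y s'‖ + ε * (t - s')) * Real.exp (K * (t - s')) :=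
      gronwallBound_le_simple hK hε (by linarith [hs'.2])
    have h4 : (‖y s'‖ + ε * (t - s')) * Real.exp (K * (t - s')) ≤
        (‖y s'‖ + ε * (t - s)) * Real.exp (K * (t - s)) := by
      have he : Real.exp (K * (t - s')) ≤ Real.exp (K * (t - s)) :=
        Real.exp_le_exp.mpr (by nlinarith [hs'.1])
      have h5 : (0:ℝ) ≤ ‖y s'‖ + ε * (t - s') := by
        have : (0:ℝ) ≤ ε * (t - s') := by nlinarith [hs'.2]
        positivity
      have h6 : ‖y s'‖ + ε * (t - s') ≤ ‖y s'‖ + ε * (t - s) := by nlinarith [hs'.1]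
      nlinarith [Real.exp_pos (K * (t - s'))]
    linarith
  -- take the limit s' → s⁺
  haveI : (𝓝[Ioo s t] s).NeBot := by
    rw [← mem_closure_iff_nhdsWithin_neBot, closure_Ioo (ne_of_lt hlt)]
    exact ⟨le_rfl, hlt.le⟩
  have hys : Tendsto (fun s' => (‖y s'‖ + ε * (t - s)) * Real.exp (K * (t - s)))
      (𝓝[Ioo s t] s) (𝓝 ((‖y s‖ + ε * (t - s)) * Real.exp (K * (t - s)))) := by
    have hcont : Tendsto y (𝓝[Ioo s t] s) (𝓝 (y s)) :=
      (hy.continuousWithinAt (left_mem_Icc.mpr hst)).mono_left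
        (nhdsWithin_mono _ Ioo_subset_Icc_self)
    exact ((hcont.norm.add tendsto_const_nhds).mul_const _)
  have hge : ‖y t‖ ≤ (‖y s‖ + ε * (t - s)) * Real.exp (K * (t - s)) := by
    exact ge_of_tendsto hys (eventually_mem_nhdsWithin.mono fun s' hs' => key s' hs')
  have : (‖y s‖ + ε * (t - s)) * Real.exp (K * (t - s)) ≤
      (δ + ε * (t - s)) * Real.exp (K * (t - s)) := by
    have := Real.exp_pos (K * (t - s))
    nlinarith
  linarith

set_option maxHeartbeats 1000000 in
/-- Piecewise Grönwall: the `ε`-bound is `εd` outside `[p,q]` (a short interval of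
length `≤ dd`) and `εM` everywhere. -/
lemma gron_piece {E : Type*} [NormedAddCommGroup E] [NormedSpace ℝ E]
    (y y' : ℝ → E) (K εd εM δ dd s t p q : ℝ)
    (hK : 0 ≤ K) (hεd : 0 ≤ εd) (hεM : 0 ≤ εM) (hδ0 : 0 ≤ δ) (hdd : 0 ≤ dd)
    (hpq : p ≤ q) (hqp : q - p ≤ dd) (hst : s ≤ t)
    (hy : ContinuousOn y (Icc s t))
    (hd : ∀ r ∈ Ioo s t, HasDerivAt y (y' r) r)
    (hbM : ∀ r ∈ Ioo s t, ‖y' r‖ ≤ K * ‖y r‖ + εM)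
    (hbd : ∀ r ∈ Ioo s t, (r < p ∨ q < r) → ‖y' r‖ ≤ K * ‖y r‖ + εd)
    (hδ : ‖y s‖ ≤ δ) :
    ‖y t‖ ≤ (δ + εd * (t - s) + εM * dd) * Real.exp (K * (t - s)) := by
  set p' : ℝ := max s (min p t) with hp'def
  set q' : ℝ := max s (min q t) with hq'def
  have hsp' : s ≤ p' := le_max_left _ _
  have hp't : p' ≤ t := max_le hst (min_le_right _ _)
  have hsq' : s ≤ q' := le_max_left _ _
  have hq't : q' ≤ t := max_le hst (min_le_right _ _)
  have hp'q' : p' ≤ q' := max_le_max le_rfl (min_le_min hpq le_rfl)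
  have hq'p' : q' - p' ≤ dd := by
    have h1 : min q t ≤ min p t + (q - p) := by
      have : min q t ≤ min (p + (q - p)) (t + (q - p)) :=
        min_le_min (by linarith) (by linarith)
      rwa [min_add_add_right] at this
    have h2 : q' ≤ p' + (q - p) := by
      calc q' ≤ max s (min p t + (q - p)) := max_le_max le_rfl h1
        _ ≤ max (s + (q - p)) (min p t + (q - p)) := max_le_max (by linarith) le_rfl
        _ = p' + (q - p) := by rw [max_add_add_right]
    linarith
  -- step 1 : on [s, p']
  have step1 : ‖y p'‖ ≤ (δ + εd * (p' - s)) * Real.exp (K * (p' - s)) := by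
    apply gron_step y y' K εd δ s p' hK hεd hsp'
    · exact hy.mono (Icc_subset_Icc le_rfl hp't)
    · intro r hr; exact hd r ⟨hr.1, lt_of_lt_of_le hr.2 hp't⟩
    · intro r hr
      refine hbd r ⟨hr.1, lt_of_lt_of_le hr.2 hp't⟩ (Or.inl ?_)
      rcases lt_max_iff.mp hr.2 with h | h
      · exact absurd hr.1 (not_lt.mpr h.le)
      · exact lt_of_lt_of_le h (min_le_left _ _)
    · exact hδ
  have hD1 : (0:ℝ) ≤ (δ + εd * (p' - s)) * Real.exp (K * (p' - s)) := by
    have : (0:ℝ) ≤ εd * (p' - s) := by nlinarith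
    positivity
  -- step 2 : on [p', q']
  have step2 : ‖y q'‖ ≤ ((δ + εd * (p' - s)) * Real.exp (K * (p' - s)) + εM * (q' - p')) *
      Real.exp (K * (q' - p')) := by
    apply gron_step y y' K εM _ p' q' hK hεM hp'q'
    · exact hy.mono (Icc_subset_Icc hsp' hq't)
    · intro r hr; exact hd r ⟨lt_of_le_of_lt hsp' hr.1, lt_of_lt_of_le hr.2 hq't⟩
    · intro r hr; exact hbM r ⟨lt_of_le_of_lt hsp' hr.1, lt_of_lt_of_le hr.2 hq't⟩
    · exact step1
  have hD2 : (0:ℝ) ≤ ((δ + εd * (p' - s)) * Real.exp (K * (p' - s)) + εM * (q' - p')) *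
      Real.exp (K * (q' - p')) := by
    have h1 : (0:ℝ) ≤ εM * (q' - p') := by nlinarith
    positivity
  -- step 3 : on [q', t]
  have step3 : ‖y t‖ ≤ (((δ + εd * (p' - s)) * Real.exp (K * (p' - s)) + εM * (q' - p')) *
      Real.exp (K * (q' - p')) + εd * (t - q')) * Real.exp (K * (t - q')) := by
    apply gron_step y y' K εd _ q' t hK hεd hq't
    · exact hy.mono (Icc_subset_Icc hsq' le_rfl)
    · intro r hr; exact hd r ⟨lt_of_le_of_lt hsq' hr.1, hr.2⟩
    · intro r hr
      refine hbd r ⟨lt_of_le_of_lt hsq' hr.1, hr.2⟩ (Or.inr ?_)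
      have h2 : min q t < r := lt_of_le_of_lt (le_max_right s _) hr.1
      rcases min_lt_iff.mp h2 with h | h
      · exact h
      · exact absurd hr.2 (not_lt.mpr h.le)
    · exact step2
  -- combine
  set E1 := Real.exp (K * (p' - s)) with hE1
  set E2 := Real.exp (K * (q' - p')) with hE2
  set E3 := Real.exp (K * (t - q')) with hE3
  have hE1p : (0:ℝ) < E1 := Real.exp_pos _
  have hE2p : (0:ℝ) < E2 := Real.exp_pos _
  have hE3p : (0:ℝ) < E3 := Real.exp_pos _
  have h1 : (1:ℝ) ≤ E1 := Real.one_le_exp (by nlinarith)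
  have h2 : (1:ℝ) ≤ E2 := Real.one_le_exp (by nlinarith)
  have h3 : (1:ℝ) ≤ E3 := Real.one_le_exp (by nlinarith)
  set P := E1 * (E2 * E3) with hP
  have hPpos : (0:ℝ) < P := by positivity
  have hprod : P = Real.exp (K * (t - s)) := by
    rw [hP, hE1, hE2, hE3, ← Real.exp_add, ← Real.exp_add]; ring_nf
  have t1 : εM * (q' - p') * (E2 * E3) ≤ εM * dd * P := by
    have ha : εM * (q' - p') ≤ εM * dd := mul_le_mul_of_nonneg_left hq'p' hεM
    have hb' : E2 * E3 ≤ P := le_mul_of_one_le_left (by positivity) h1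
    exact mul_le_mul ha hb' (by positivity) (mul_nonneg hεM hdd)
  have t2 : εd * (t - q') * E3 ≤ εd * (t - q') * P := by
    have hb' : E3 ≤ P := by
      have ha' : E3 ≤ E2 * E3 := le_mul_of_one_le_left hE3p.le h2
      have hb'' : E2 * E3 ≤ P := le_mul_of_one_le_left (by positivity) h1
      exact ha'.trans hb''
    have hc : (0:ℝ) ≤ εd * (t - q') := mul_nonneg hεd (by linarith)
    exact mul_le_mul_of_nonneg_left hb' hc
  have t0 : (δ + εd * (p' - s) + εM * dd + εd * (t - q')) * P ≤
      (δ + εd * (t - s) + εM * dd) * P := by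
    have : δ + εd * (p' - s) + εM * dd + εd * (t - q') ≤ δ + εd * (t - s) + εM * dd := by
      have := mul_nonneg hεd (sub_nonneg.mpr hp'q')
      nlinarith
    exact mul_le_mul_of_nonneg_right this hPpos.le
  have expand : (((δ + εd * (p' - s)) * E1 + εM * (q' - p')) * E2 + εd * (t - q')) * E3
      = (δ + εd * (p' - s)) * P + εM * (q' - p') * (E2 * E3) + εd * (t - q') * E3 := by
    rw [hP]; ring
  have goal2 : (((δ + εd * (p' - s)) * E1 + εM * (q' - p')) * E2 + εd * (t - q')) * E3 ≤
      (δ + εd * (t - s) + εM * dd) * Real.exp (K * (t - s)) := by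
    rw [expand, ← hprod]
    have step : (δ + εd * (p' - s)) * P + εM * (q' - p') * (E2 * E3) + εd * (t - q') * E3 ≤
        (δ + εd * (p' - s)) * P + εM * dd * P + εd * (t - q') * P := by linarith
    refine step.trans ?_
    have hring : (δ + εd * (p' - s)) * P + εM * dd * P + εd * (t - q') * P =
        (δ + εd * (p' - s) + εM * dd + εd * (t - q')) * P := by ring
    rw [hring]; exact t0
  linarith

lemma nebot_Ioo_right {a b : ℝ} (h : a < b) : (𝓝[Set.Ioo a b] b).NeBot := by
  rw [← mem_closure_iff_nhdsWithin_neBot, closure_Ioo h.ne]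
  exact ⟨h.le, le_rfl⟩

lemma norm_limit_le {E : Type*} [NormedAddCommGroup E] {x y : ℝ → E} {a b : E} {S : Set ℝ}
    {c C : ℝ} (hS : (𝓝[S] c).NeBot) (hx : Tendsto x (𝓝[S] c) (𝓝 a))
    (hy : Tendsto y (𝓝[S] c) (𝓝 b)) (h : ∀ t ∈ S, ‖x t - y t‖ ≤ C) : ‖a - b‖ ≤ C :=
  le_of_tendsto ((hx.sub hy).norm) (eventually_mem_nhdsWithin.mono h)

/-- The two-piece semimetric for piecewise smooth functions with breakpoints `β₁, β₂`. -/
noncomputable def pieceDist {k : ℕ} (T β₁ β₂ : ℝ)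
    (w₁ w₂ : ℝ → EuclideanSpace ℝ (Fin k)) : ℝ :=
  max (max (sSup ((fun t => ‖w₁ t - w₂ t‖) '' Ioo 0 (min β₁ β₂)))
        (sSup ((fun t => ‖w₁ t - w₂ t‖) '' Ioo (max β₁ β₂) T)))
    |β₁ - β₂|

/-- Hybrid trajectory with exactly one collision at `γ`, pre-collision state `xm`. -/
def IsHybridTraj {m mu : ℕ}
    (f : EuclideanSpace ℝ (Fin m) → EuclideanSpace ℝ (Fin mu) → EuclideanSpace ℝ (Fin m))
    (g : EuclideanSpace ℝ (Fin m) → EuclideanSpace ℝ (Fin m))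
    (ψ : EuclideanSpace ℝ (Fin m) → ℝ) (T : ℝ) (x₀ : EuclideanSpace ℝ (Fin m))
    (u : ℝ → EuclideanSpace ℝ (Fin mu)) (x : ℝ → EuclideanSpace ℝ (Fin m))
    (γ : ℝ) (xm : EuclideanSpace ℝ (Fin m)) : Prop :=
  0 < γ ∧ γ < T ∧ x 0 = x₀ ∧
  ContinuousOn x (Ico 0 γ) ∧ ContinuousOn x (Icc γ T) ∧
  (∀ t ∈ Ioo (0:ℝ) γ, HasDerivAt x (f (x t) (u t)) t) ∧
  (∀ t ∈ Ioo γ T, HasDerivAt x (f (x t) (u t)) t) ∧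
  Tendsto x (𝓝[<] γ) (𝓝 xm) ∧ ψ xm = 0 ∧ x γ = g xm ∧
  (∀ t ∈ Ico (0:ℝ) γ, 0 < ψ (x t)) ∧ (∀ t ∈ Icc γ T, 0 < ψ (x t))

set_option maxHeartbeats 2000000 in
/-- Theorem A.19, estimate of the state in the semimetric.
Let `u₁` have one stable collision (with factors `a, b, K, S`), let `C̃₃, C̃₄` be
the constants from the stability-of-collision theorem, let `u₁, u₂` be piecewise
smooth with two pieces (breakpoints `β₁, β₂`), with collision tendencies bounded
below by `V > 0` and `d(u₁,u₂) ≤ C̃₃`.  Then there is `C₅` depending only on the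
problem data and the stable collision factors of `u₁` with
`d(x₁,x₂) ≤ C₅ · d(u₁,u₂)` (the semimetric of the states using the collision
times `γ₁, γ₂` as breakpoints). -/
theorem stmt16 {m mu : ℕ}
    (f : EuclideanSpace ℝ (Fin m) → EuclideanSpace ℝ (Fin mu) → EuclideanSpace ℝ (Fin m))
    (g : EuclideanSpace ℝ (Fin m) → EuclideanSpace ℝ (Fin m))
    (ψ : EuclideanSpace ℝ (Fin m) → ℝ)
    (Bfx Bfu Bg Bψ Mf Mu T a b K S C₃' C₄' V γ₁ β₁ : ℝ)
    (x₀ : EuclideanSpace ℝ (Fin m))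
    (u₁ : ℝ → EuclideanSpace ℝ (Fin mu)) (x₁ : ℝ → EuclideanSpace ℝ (Fin m))
    (xm₁ : EuclideanSpace ℝ (Fin m)) (um₁ : EuclideanSpace ℝ (Fin mu))
    (hT : 0 < T) (hC₃' : 0 < C₃') (hC₄' : 0 < C₄') (hV : 0 < V)
    (ha : 0 < a) (hb : 0 < b) (hK : 0 < K) (hS : 0 < S)
    (hf : ∀ a' b' c' d', ‖f b' d' - f a' c'‖ ≤ Bfx * ‖b' - a'‖ + Bfu * ‖d' - c'‖)
    (hg : ∀ a' b', ‖g b' - g a'‖ ≤ Bg * ‖b' - a'‖)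
    (hψ : ∀ a' b', |ψ b' - ψ a'| ≤ Bψ * ‖b' - a'‖)
    (hMf₁ : ∀ t ∈ Icc (0:ℝ) T, ‖f (x₁ t) (u₁ t)‖ ≤ Mf)
    (htraj₁ : IsHybridTraj f g ψ T x₀ u₁ x₁ γ₁ xm₁)
    (hum₁ : Tendsto u₁ (𝓝[<] γ₁) (𝓝 um₁))
    -- stable collision condition for `u₁` with factors `a, b, K, S`
    (hsb : ∀ t ∈ Ico (0:ℝ) (γ₁ - b / K), b ≤ ψ (x₁ t))
    (hsK : ∀ t ∈ Ico (γ₁ - b / K) γ₁, K * (γ₁ - t) ≤ ψ (x₁ t))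
    (hsa : ∀ t ∈ Ioc γ₁ T, a ≤ ψ (x₁ t))
    (hMJ : Bfu * sSup ((fun s => ‖um₁ - u₁ s‖) '' Icc 0 T) + S ≤ K)
    -- `u₁` is piecewise smooth with two pieces, breakpoint `β₁`, bounded by `M_u`
    (hβ₁ : β₁ ∈ Ioo (0:ℝ) T)
    (hu₁s : ContDiffOn ℝ (⊤ : ℕ∞) u₁ (Ioo 0 β₁) ∧ ContDiffOn ℝ (⊤ : ℕ∞) u₁ (Ioo β₁ T))
    (hu₁b : ∀ t, ‖u₁ t‖ ≤ Mu)
    -- collision tendency of `u₁` bounded below by `V`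
    (hV₁ : V ≤ |⟪gradient ψ xm₁, f xm₁ um₁⟫|) :
    ∃ C₅ > (0:ℝ),
      ∀ (u₂ : ℝ → EuclideanSpace ℝ (Fin mu)) (x₂ : ℝ → EuclideanSpace ℝ (Fin m))
        (γ₂ β₂ : ℝ) (xm₂ : EuclideanSpace ℝ (Fin m)) (um₂ : EuclideanSpace ℝ (Fin mu)),
        IsHybridTraj f g ψ T x₀ u₂ x₂ γ₂ xm₂ →
        (∀ t ∈ Icc (0:ℝ) T, ‖f (x₂ t) (u₂ t)‖ ≤ Mf) →
        β₂ ∈ Ioo (0:ℝ) T →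
        ContDiffOn ℝ (⊤ : ℕ∞) u₂ (Ioo 0 β₂) → ContDiffOn ℝ (⊤ : ℕ∞) u₂ (Ioo β₂ T) →
        (∀ t, ‖u₂ t‖ ≤ Mu) →
        Tendsto u₂ (𝓝[<] γ₂) (𝓝 um₂) →
        V ≤ |⟪gradient ψ xm₂, f xm₂ um₂⟫| →
        -- stability-of-collision consequences with thresholds `C̃₃, C̃₄`
        pieceDist T β₁ β₂ u₁ u₂ ≤ C₃' →
        |γ₁ - γ₂| ≤ C₄' * pieceDist T β₁ β₂ u₁ u₂ →
        pieceDist T γ₁ γ₂ x₁ x₂ ≤ C₅ * pieceDist T β₁ β₂ u₁ u₂ := by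
  obtain ⟨hγ₁0, hγ₁T, hx₁0, hc₁pre, hc₁post, hd₁pre, hd₁post, hxm₁lim, hψ₁, hjump₁, -, -⟩ :=
    htraj₁
  have hMf0 : 0 ≤ Mf := le_trans (norm_nonneg _) (hMf₁ 0 ⟨le_rfl, hT.le⟩)
  have hMu0 : 0 ≤ Mu := le_trans (norm_nonneg _) (hu₁b 0)
  set K₀ : ℝ := max Bfx 0 with hK₀def
  set B₁ : ℝ := max Bfu 0 with hB₁def
  set B₂ : ℝ := max Bg 0 with hB₂def
  have hK₀ : 0 ≤ K₀ := le_max_right _ _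
  have hB₁ : 0 ≤ B₁ := le_max_right _ _
  have hB₂ : 0 ≤ B₂ := le_max_right _ _
  set A₁ : ℝ := (B₁ * T + 2 * B₁ * Mu) * Real.exp (K₀ * T) with hA₁def
  have hA₁0 : 0 ≤ A₁ := by
    have : 0 ≤ B₁ * T + 2 * B₁ * Mu := by nlinarith
    positivity
  set Dc : ℝ := B₂ * (A₁ + Mf * C₄') + Mf * C₄' with hDcdef
  have hDc0 : 0 ≤ Dc := by
    have h1 : 0 ≤ Mf * C₄' := mul_nonneg hMf0 hC₄'.le
    have h2 : 0 ≤ B₂ * (A₁ + Mf * C₄') := mul_nonneg hB₂ (by linarith)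
    linarith [hDcdef.ge]
  set A₂ : ℝ := (Dc + B₁ * T + 2 * B₁ * Mu) * Real.exp (K₀ * T) with hA₂def
  have hA₂0 : 0 ≤ A₂ := by
    have : 0 ≤ Dc + B₁ * T + 2 * B₁ * Mu := by nlinarith
    positivity
  refine ⟨max (max A₁ A₂) C₄', lt_of_lt_of_le hC₄' (le_max_right _ _), ?_⟩
  set C₅ : ℝ := max (max A₁ A₂) C₄' with hC₅def
  intro u₂ x₂ γ₂ β₂ xm₂ um₂ htraj₂ hMf₂ hβ₂ hu₂s1 hu₂s2 hu₂b hum₂ hV₂ hC₃ hγclose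
  obtain ⟨hγ₂0, hγ₂T, hx₂0, hc₂pre, hc₂post, hd₂pre, hd₂post, hxm₂lim, hψ₂, hjump₂, -, -⟩ :=
    htraj₂
  set dd : ℝ := pieceDist T β₁ β₂ u₁ u₂ with hdddef
  have habs : |β₁ - β₂| ≤ dd := le_max_right _ _
  have hdd0 : 0 ≤ dd := le_trans (abs_nonneg _) habs
  -- pointwise control of the input difference
  have hu2M : ∀ r, ‖u₁ r - u₂ r‖ ≤ 2 * Mu := fun r =>
    (norm_sub_le _ _).trans (by linarith [hu₁b r, hu₂b r])
  have hud : ∀ r ∈ Ioo (0:ℝ) T, (r < min β₁ β₂ ∨ max β₁ β₂ < r) → ‖u₁ r - u₂ r‖ ≤ dd := by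
    intro r hr hc
    rcases hc with h | h
    · have hbdd : BddAbove ((fun t => ‖u₁ t - u₂ t‖) '' Ioo 0 (min β₁ β₂)) :=
        ⟨2 * Mu, by rintro z ⟨t, -, rfl⟩; exact hu2M t⟩
      have h1 : ‖u₁ r - u₂ r‖ ≤ sSup ((fun t => ‖u₁ t - u₂ t‖) '' Ioo 0 (min β₁ β₂)) :=
        le_csSup hbdd ⟨r, ⟨hr.1, h⟩, rfl⟩
      exact h1.trans (le_trans (le_max_left _ _) (le_max_left _ _))
    · have hbdd : BddAbove ((fun t => ‖u₁ t - u₂ t‖) '' Ioo (max β₁ β₂) T) :=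
        ⟨2 * Mu, by rintro z ⟨t, -, rfl⟩; exact hu2M t⟩
      have h1 : ‖u₁ r - u₂ r‖ ≤ sSup ((fun t => ‖u₁ t - u₂ t‖) '' Ioo (max β₁ β₂) T) :=
        le_csSup hbdd ⟨r, ⟨h, hr.2⟩, rfl⟩
      exact h1.trans (le_trans (le_max_right _ _) (le_max_left _ _))
  -- bound on the derivative difference
  have hyb : ∀ r, ‖f (x₁ r) (u₁ r) - f (x₂ r) (u₂ r)‖ ≤
      K₀ * ‖x₁ r - x₂ r‖ + B₁ * ‖u₁ r - u₂ r‖ := by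
    intro r
    refine (hf (x₂ r) (x₁ r) (u₂ r) (u₁ r)).trans ?_
    have h1 : Bfx * ‖x₁ r - x₂ r‖ ≤ K₀ * ‖x₁ r - x₂ r‖ :=
      mul_le_mul_of_nonneg_right (le_max_left _ _) (norm_nonneg _)
    have h2 : Bfu * ‖u₁ r - u₂ r‖ ≤ B₁ * ‖u₁ r - u₂ r‖ :=
      mul_le_mul_of_nonneg_right (le_max_left _ _) (norm_nonneg _)
    linarith
  -- Grönwall estimate on the first piece
  have H1 : ∀ t ∈ Ioo 0 (min γ₁ γ₂), ‖x₁ t - x₂ t‖ ≤ A₁ * dd := by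
    intro t ht
    have ht1 : t < γ₁ := lt_of_lt_of_le ht.2 (min_le_left _ _)
    have ht2 : t < γ₂ := lt_of_lt_of_le ht.2 (min_le_right _ _)
    have htT : t < T := ht1.trans hγ₁T
    have hcont : ContinuousOn (fun r => x₁ r - x₂ r) (Icc 0 t) :=
      (hc₁pre.mono fun r hr => ⟨hr.1, lt_of_le_of_lt hr.2 ht1⟩).sub
        (hc₂pre.mono fun r hr => ⟨hr.1, lt_of_le_of_lt hr.2 ht2⟩)
    have hderiv : ∀ r ∈ Ioo (0:ℝ) t, HasDerivAt (fun r => x₁ r - x₂ r)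
        (f (x₁ r) (u₁ r) - f (x₂ r) (u₂ r)) r := fun r hr =>
      (hd₁pre r ⟨hr.1, hr.2.trans ht1⟩).sub (hd₂pre r ⟨hr.1, hr.2.trans ht2⟩)
    have hbM : ∀ r ∈ Ioo (0:ℝ) t, ‖f (x₁ r) (u₁ r) - f (x₂ r) (u₂ r)‖ ≤
        K₀ * ‖x₁ r - x₂ r‖ + B₁ * (2 * Mu) := by
      intro r hr
      have := mul_le_mul_of_nonneg_left (hu2M r) hB₁
      linarith [hyb r]
    have hbd : ∀ r ∈ Ioo (0:ℝ) t, (r < min β₁ β₂ ∨ max β₁ β₂ < r) →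
        ‖f (x₁ r) (u₁ r) - f (x₂ r) (u₂ r)‖ ≤ K₀ * ‖x₁ r - x₂ r‖ + B₁ * dd := by
      intro r hr hc
      have := mul_le_mul_of_nonneg_left (hud r ⟨hr.1, hr.2.trans htT⟩ hc) hB₁
      linarith [hyb r]
    have main := gron_piece (fun r => x₁ r - x₂ r)
      (fun r => f (x₁ r) (u₁ r) - f (x₂ r) (u₂ r)) K₀ (B₁ * dd) (B₁ * (2 * Mu)) 0 dd 0 t
      (min β₁ β₂) (max β₁ β₂) hK₀ (mul_nonneg hB₁ hdd0)
      (mul_nonneg hB₁ (by linarith)) le_rfl hdd0 min_le_max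
      (by rw [max_sub_min_eq_abs, abs_sub_comm]; exact habs) ht.1.le hcont hderiv hbM hbd
      (by show ‖x₁ 0 - x₂ 0‖ ≤ 0; rw [hx₁0, hx₂0]; simp)
    refine main.trans ?_
    have hE : Real.exp (K₀ * (t - 0)) ≤ Real.exp (K₀ * T) :=
      Real.exp_le_exp.mpr (by nlinarith)
    have h1 : 0 ≤ B₁ * dd := mul_nonneg hB₁ hdd0
    have hX : 0 + B₁ * dd * (t - 0) + B₁ * (2 * Mu) * dd ≤ (B₁ * T + 2 * B₁ * Mu) * dd := by
      nlinarith
    have hX0 : 0 ≤ 0 + B₁ * dd * (t - 0) + B₁ * (2 * Mu) * dd := by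
      nlinarith [mul_nonneg h1 (le_of_lt ht.1),
        mul_nonneg (mul_nonneg hB₁ (by linarith : (0:ℝ) ≤ 2 * Mu)) hdd0]
    calc (0 + B₁ * dd * (t - 0) + B₁ * (2 * Mu) * dd) * Real.exp (K₀ * (t - 0))
        ≤ ((B₁ * T + 2 * B₁ * Mu) * dd) * Real.exp (K₀ * T) := by
          exact mul_le_mul hX hE (Real.exp_pos _).le
            (mul_nonneg (by nlinarith [mul_nonneg hB₁ hT.le, mul_nonneg hB₁ hMu0]) hdd0)
      _ = A₁ * dd := by rw [hA₁def]; ring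
  -- Lipschitz-in-time estimates for each trajectory on its smooth pieces
  have lip₁post : ∀ s t', γ₁ ≤ s → s ≤ t' → t' ≤ T → ‖x₁ t' - x₁ s‖ ≤ Mf * (t' - s) := by
    intro s t' h1 h2 h3
    have hs0 : (0:ℝ) ≤ s := le_trans hγ₁0.le h1
    have main := gron_step (fun r => x₁ r - x₁ s) (fun r => f (x₁ r) (u₁ r)) 0 Mf 0 s t'
      le_rfl hMf0 h2
      ((hc₁post.mono (Icc_subset_Icc h1 h3)).sub continuousOn_const)
      (fun r hr => (hd₁post r ⟨lt_of_le_of_lt h1 hr.1, lt_of_lt_of_le hr.2 h3⟩).sub_const _)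
      (fun r hr => by
        have := hMf₁ r ⟨le_trans hs0 hr.1.le, (hr.2.trans_le h3).le⟩
        simpa using this)
      (by simp)
    simpa using main
  have lip₂post : ∀ s t', γ₂ ≤ s → s ≤ t' → t' ≤ T → ‖x₂ t' - x₂ s‖ ≤ Mf * (t' - s) := by
    intro s t' h1 h2 h3
    have hs0 : (0:ℝ) ≤ s := le_trans hγ₂0.le h1
    have main := gron_step (fun r => x₂ r - x₂ s) (fun r => f (x₂ r) (u₂ r)) 0 Mf 0 s t'
      le_rfl hMf0 h2
      ((hc₂post.mono (Icc_subset_Icc h1 h3)).sub continuousOn_const)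
      (fun r hr => (hd₂post r ⟨lt_of_le_of_lt h1 hr.1, lt_of_lt_of_le hr.2 h3⟩).sub_const _)
      (fun r hr => by
        have := hMf₂ r ⟨le_trans hs0 hr.1.le, (hr.2.trans_le h3).le⟩
        simpa using this)
      (by simp)
    simpa using main
  have lip₁pre : ∀ s t', 0 ≤ s → s ≤ t' → t' < γ₁ → ‖x₁ t' - x₁ s‖ ≤ Mf * (t' - s) := by
    intro s t' h1 h2 h3
    have main := gron_step (fun r => x₁ r - x₁ s) (fun r => f (x₁ r) (u₁ r)) 0 Mf 0 s t'
      le_rfl hMf0 h2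
      ((hc₁pre.mono fun r hr => ⟨le_trans h1 hr.1, lt_of_le_of_lt hr.2 h3⟩).sub
        continuousOn_const)
      (fun r hr => (hd₁pre r ⟨lt_of_le_of_lt h1 hr.1, hr.2.trans h3⟩).sub_const _)
      (fun r hr => by
        have := hMf₁ r ⟨le_trans h1 hr.1.le, ((hr.2.trans h3).trans hγ₁T).le⟩
        simpa using this)
      (by simp)
    simpa using main
  have lip₂pre : ∀ s t', 0 ≤ s → s ≤ t' → t' < γ₂ → ‖x₂ t' - x₂ s‖ ≤ Mf * (t' - s) := by
    intro s t' h1 h2 h3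
    have main := gron_step (fun r => x₂ r - x₂ s) (fun r => f (x₂ r) (u₂ r)) 0 Mf 0 s t'
      le_rfl hMf0 h2
      ((hc₂pre.mono fun r hr => ⟨le_trans h1 hr.1, lt_of_le_of_lt hr.2 h3⟩).sub
        continuousOn_const)
      (fun r hr => (hd₂pre r ⟨lt_of_le_of_lt h1 hr.1, hr.2.trans h3⟩).sub_const _)
      (fun r hr => by
        have := hMf₂ r ⟨le_trans h1 hr.1.le, ((hr.2.trans h3).trans hγ₂T).le⟩
        simpa using this)
      (by simp)
    simpa using main
  -- jump estimate (symmetric in the two trajectories)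
  have key : ∀ (xA xB : ℝ → EuclideanSpace ℝ (Fin m)) (γA γB : ℝ)
      (xmA xmB : EuclideanSpace ℝ (Fin m)),
      0 < γA → γA ≤ γB → γB < T →
      ContinuousOn xB (Ico 0 γB) →
      Tendsto xA (𝓝[<] γA) (𝓝 xmA) → Tendsto xB (𝓝[<] γB) (𝓝 xmB) →
      xA γA = g xmA → xB γB = g xmB →
      (∀ t ∈ Ioo (0:ℝ) γA, ‖xA t - xB t‖ ≤ A₁ * dd) →
      γB - γA ≤ C₄' * dd →
      (∀ s t', γA ≤ s → s ≤ t' → t' ≤ T → ‖xA t' - xA s‖ ≤ Mf * (t' - s)) →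
      (∀ s t', 0 ≤ s → s ≤ t' → t' < γB → ‖xB t' - xB s‖ ≤ Mf * (t' - s)) →
      ‖xA γB - xB γB‖ ≤ Dc * dd := by
    intro xA xB γA γB xmA xmB hγA0 hAB hγBT hcB hlimA hlimB hjA hjB hH1 hgap lipA lipB
    have hgapd : Mf * (γB - γA) ≤ Mf * (C₄' * dd) := mul_le_mul_of_nonneg_left hgap hMf0
    have h3 : 0 ≤ Mf * (C₄' * dd) := mul_nonneg hMf0 (mul_nonneg hC₄'.le hdd0)
    haveI n1 : (𝓝[Ioo 0 γA] γA).NeBot := nebot_Ioo_right hγA0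
    have hlimA' : Tendsto xA (𝓝[Ioo 0 γA] γA) (𝓝 xmA) :=
      hlimA.mono_left (nhdsWithin_mono _ Ioo_subset_Iio_self)
    rcases eq_or_lt_of_le hAB with rfl | hlt
    · have hlimB' : Tendsto xB (𝓝[Ioo 0 γA] γA) (𝓝 xmB) :=
        hlimB.mono_left (nhdsWithin_mono _ Ioo_subset_Iio_self)
      have hmm : ‖xmA - xmB‖ ≤ A₁ * dd := norm_limit_le n1 hlimA' hlimB' hH1
      rw [hjA, hjB]
      refine (hg xmB xmA).trans ?_
      have h1 : Bg * ‖xmA - xmB‖ ≤ B₂ * ‖xmA - xmB‖ :=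
        mul_le_mul_of_nonneg_right (le_max_left _ _) (norm_nonneg _)
      have h2 : B₂ * ‖xmA - xmB‖ ≤ B₂ * (A₁ * dd) := mul_le_mul_of_nonneg_left hmm hB₂
      have h4 : 0 ≤ B₂ * (Mf * (C₄' * dd)) := mul_nonneg hB₂ h3
      have hDd : Dc * dd = B₂ * (A₁ * dd) + B₂ * (Mf * (C₄' * dd)) + Mf * (C₄' * dd) := by
        rw [hDcdef]; ring
      linarith
    · have hγAmem : γA ∈ Ico (0:ℝ) γB := ⟨hγA0.le, hlt⟩
      have hxBcont : Tendsto xB (𝓝[Ioo 0 γA] γA) (𝓝 (xB γA)) :=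
        (hcB.continuousWithinAt hγAmem).mono_left
          (nhdsWithin_mono _ (fun r hr => ⟨hr.1.le, hr.2.trans hlt⟩))
      have e1 : ‖xmA - xB γA‖ ≤ A₁ * dd := norm_limit_le n1 hlimA' hxBcont hH1
      haveI n2 : (𝓝[Ioo γA γB] γB).NeBot := nebot_Ioo_right hlt
      have hlimB' : Tendsto xB (𝓝[Ioo γA γB] γB) (𝓝 xmB) :=
        hlimB.mono_left (nhdsWithin_mono _ Ioo_subset_Iio_self)
      have e2 : ‖xmB - xB γA‖ ≤ Mf * (γB - γA) := by
        refine norm_limit_le (y := fun _ => xB γA) n2 hlimB' tendsto_const_nhds ?_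
        intro t ht
        refine (lipB γA t hγA0.le ht.1.le ht.2).trans ?_
        exact mul_le_mul_of_nonneg_left (by linarith [ht.2]) hMf0
      have e3 : ‖xmA - xmB‖ ≤ A₁ * dd + Mf * (γB - γA) := by
        have hsplit : xmA - xmB = (xmA - xB γA) - (xmB - xB γA) := by abel
        rw [hsplit]
        exact (norm_sub_le _ _).trans (by linarith)
      have e4 : ‖xA γA - xB γB‖ ≤ B₂ * (A₁ * dd + Mf * (C₄' * dd)) := by
        rw [hjA, hjB]
        refine (hg xmB xmA).trans ?_
        have h1 : Bg * ‖xmA - xmB‖ ≤ B₂ * ‖xmA - xmB‖ :=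
          mul_le_mul_of_nonneg_right (le_max_left _ _) (norm_nonneg _)
        have h2 : B₂ * ‖xmA - xmB‖ ≤ B₂ * (A₁ * dd + Mf * (C₄' * dd)) :=
          mul_le_mul_of_nonneg_left (by linarith) hB₂
        linarith
      have e5 : ‖xA γB - xA γA‖ ≤ Mf * (C₄' * dd) :=
        (lipA γA γB le_rfl hlt.le hγBT.le).trans hgapd
      have tri : xA γB - xB γB = (xA γB - xA γA) + (xA γA - xB γB) := by abel
      have hDd : Dc * dd = B₂ * (A₁ * dd + Mf * (C₄' * dd)) + Mf * (C₄' * dd) := by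
        rw [hDcdef]; ring
      calc ‖xA γB - xB γB‖ ≤ ‖xA γB - xA γA‖ + ‖xA γA - xB γB‖ := by
            rw [tri]; exact norm_add_le _ _
        _ ≤ Dc * dd := by linarith
  have Hjump : ‖x₁ (max γ₁ γ₂) - x₂ (max γ₁ γ₂)‖ ≤ Dc * dd := by
    rcases le_total γ₁ γ₂ with hc | hc
    · rw [max_eq_right hc]
      have hgap : γ₂ - γ₁ ≤ C₄' * dd := by
        have h := le_abs_self (γ₂ - γ₁)
        rw [abs_sub_comm] at h
        linarith
      exact key x₁ x₂ γ₁ γ₂ xm₁ xm₂ hγ₁0 hc hγ₂T hc₂pre hxm₁lim hxm₂lim hjump₁ hjump₂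
        (fun t ht => H1 t (by rwa [min_eq_left hc])) hgap lip₁post lip₂pre
    · rw [max_eq_left hc]
      have hgap : γ₁ - γ₂ ≤ C₄' * dd := by linarith [le_abs_self (γ₁ - γ₂)]
      have hsym := key x₂ x₁ γ₂ γ₁ xm₂ xm₁ hγ₂0 hc hγ₁T hc₁pre hxm₂lim hxm₁lim hjump₂ hjump₁
        (fun t ht => by rw [norm_sub_rev]; exact H1 t (by rwa [min_eq_right hc]))
        hgap lip₂post lip₁pre
      rw [norm_sub_rev]; exact hsym
  -- Grönwall estimate on the second piece
  have H2 : ∀ t ∈ Ioo (max γ₁ γ₂) T, ‖x₁ t - x₂ t‖ ≤ A₂ * dd := by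
    intro t ht
    have hc₂γ₁ : γ₁ ≤ max γ₁ γ₂ := le_max_left _ _
    have hc₂γ₂ : γ₂ ≤ max γ₁ γ₂ := le_max_right _ _
    have hc₂0 : 0 < max γ₁ γ₂ := lt_of_lt_of_le hγ₁0 hc₂γ₁
    have hcont : ContinuousOn (fun r => x₁ r - x₂ r) (Icc (max γ₁ γ₂) t) :=
      (hc₁post.mono (Icc_subset_Icc hc₂γ₁ ht.2.le)).sub
        (hc₂post.mono (Icc_subset_Icc hc₂γ₂ ht.2.le))
    have hderiv : ∀ r ∈ Ioo (max γ₁ γ₂) t, HasDerivAt (fun r => x₁ r - x₂ r)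
        (f (x₁ r) (u₁ r) - f (x₂ r) (u₂ r)) r := fun r hr =>
      (hd₁post r ⟨lt_of_le_of_lt hc₂γ₁ hr.1, hr.2.trans ht.2⟩).sub
        (hd₂post r ⟨lt_of_le_of_lt hc₂γ₂ hr.1, hr.2.trans ht.2⟩)
    have hbM : ∀ r ∈ Ioo (max γ₁ γ₂) t, ‖f (x₁ r) (u₁ r) - f (x₂ r) (u₂ r)‖ ≤
        K₀ * ‖x₁ r - x₂ r‖ + B₁ * (2 * Mu) := by
      intro r hr
      have := mul_le_mul_of_nonneg_left (hu2M r) hB₁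
      linarith [hyb r]
    have hbd : ∀ r ∈ Ioo (max γ₁ γ₂) t, (r < min β₁ β₂ ∨ max β₁ β₂ < r) →
        ‖f (x₁ r) (u₁ r) - f (x₂ r) (u₂ r)‖ ≤ K₀ * ‖x₁ r - x₂ r‖ + B₁ * dd := by
      intro r hr hc
      have := mul_le_mul_of_nonneg_left
        (hud r ⟨hc₂0.trans hr.1, hr.2.trans ht.2⟩ hc) hB₁
      linarith [hyb r]
    have main := gron_piece (fun r => x₁ r - x₂ r)
      (fun r => f (x₁ r) (u₁ r) - f (x₂ r) (u₂ r)) K₀ (B₁ * dd) (B₁ * (2 * Mu)) (Dc * dd) dd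
      (max γ₁ γ₂) t (min β₁ β₂) (max β₁ β₂) hK₀ (mul_nonneg hB₁ hdd0)
      (mul_nonneg hB₁ (by linarith)) (mul_nonneg hDc0 hdd0) hdd0 min_le_max
      (by rw [max_sub_min_eq_abs, abs_sub_comm]; exact habs) ht.1.le hcont hderiv hbM hbd
      (by show ‖x₁ (max γ₁ γ₂) - x₂ (max γ₁ γ₂)‖ ≤ Dc * dd; exact Hjump)
    refine main.trans ?_
    have hE : Real.exp (K₀ * (t - max γ₁ γ₂)) ≤ Real.exp (K₀ * T) :=
      Real.exp_le_exp.mpr (by nlinarith [ht.2, hc₂0])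
    have h1 : 0 ≤ B₁ * dd := mul_nonneg hB₁ hdd0
    have hts : 0 ≤ t - max γ₁ γ₂ := by linarith [ht.1]
    have htsT : t - max γ₁ γ₂ ≤ T := by linarith [ht.2, hc₂0]
    have hX : Dc * dd + B₁ * dd * (t - max γ₁ γ₂) + B₁ * (2 * Mu) * dd ≤
        (Dc + B₁ * T + 2 * B₁ * Mu) * dd := by nlinarith
    have hX0 : 0 ≤ Dc * dd + B₁ * dd * (t - max γ₁ γ₂) + B₁ * (2 * Mu) * dd := by
      nlinarith [mul_nonneg h1 hts, mul_nonneg hDc0 hdd0,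
        mul_nonneg (mul_nonneg hB₁ (by linarith : (0:ℝ) ≤ 2 * Mu)) hdd0]
    calc (Dc * dd + B₁ * dd * (t - max γ₁ γ₂) + B₁ * (2 * Mu) * dd) *
          Real.exp (K₀ * (t - max γ₁ γ₂))
        ≤ ((Dc + B₁ * T + 2 * B₁ * Mu) * dd) * Real.exp (K₀ * T) := by
          exact mul_le_mul hX hE (Real.exp_pos _).le
            (mul_nonneg (by nlinarith [mul_nonneg hB₁ hT.le, mul_nonneg hB₁ hMu0]) hdd0)
      _ = A₂ * dd := by rw [hA₂def]; ring
  -- final assembly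
  have hA₁C : A₁ ≤ C₅ := le_trans (le_max_left _ _) (le_max_left _ _)
  have hA₂C : A₂ ≤ C₅ := le_trans (le_max_right _ _) (le_max_left _ _)
  have hC₄C : C₄' ≤ C₅ := le_max_right _ _
  have hC₅0 : 0 ≤ C₅ := hC₄'.le.trans hC₄C
  show pieceDist T γ₁ γ₂ x₁ x₂ ≤ C₅ * dd
  unfold pieceDist
  refine max_le (max_le ?_ ?_) ?_
  · refine Real.sSup_le ?_ (mul_nonneg hC₅0 hdd0)
    rintro z ⟨t, ht, rfl⟩
    exact (H1 t ht).trans (mul_le_mul_of_nonneg_right hA₁C hdd0)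
  · refine Real.sSup_le ?_ (mul_nonneg hC₅0 hdd0)
    rintro z ⟨t, ht, rfl⟩
    exact (H2 t ht).trans (mul_le_mul_of_nonneg_right hA₂C hdd0)
  · exact hγclose.trans (mul_le_mul_of_nonneg_right hC₄C hdd0)
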